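/- arXiv:1712.05770 — 3 statements merged into one kernel-verified Lean document; each statement's English description precedes it below -/
import Mathlib

section
/- Suppose the bounded operator Y : H_D → H_A is a solution of the Riccati equation YD − AY + YCY = B. Set Z_D := D + CY. Then for every z in the resolvent set of A the Schur complement factorizes as M_D(z) = W_D(z) ∘ (Z_D − z·I), where W_D(z) := I − C(A − z)^{-1}Y. -/
/-!
Solving the Riccati equation for `B` gives `B = Y (Z_D - z) - (A - z) Y`. Substituting this
into `M_D(z)`, the term `C (A - z)⁻¹ (A - z) Y = C Y` cancels the `C Y` hidden in
`D - z = (Z_D - z) - C Y`, and what is left is `(Z_D - z) - C (A - z)⁻¹ Y (Z_D - z)`,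
which is `W_D(z) (Z_D - z)`.
-/

open ContinuousLinearMap

theorem isUnit_sub_smul_one_of_mem_resolventSet {𝕜 R : Type*} [CommRing 𝕜] [Ring R]
    [Algebra 𝕜 R] {a : R} {z : 𝕜} (hz : z ∈ resolventSet 𝕜 a) : IsUnit (a - z • 1) := by
  simpa only [neg_sub, Algebra.algebraMap_eq_smul_one] using
    (spectrum.mem_resolventSet_iff.mp hz).neg

section

variable {𝕜 E F : Type*} [NontriviallyNormedField 𝕜]
  [NormedAddCommGroup E] [NormedSpace 𝕜 E] [NormedAddCommGroup F] [NormedSpace 𝕜 F]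

theorem riccati_eq_comp_shift_sub_shift_comp (A : E →L[𝕜] E) (C : E →L[𝕜] F) (D : F →L[𝕜] F)
    (Y : F →L[𝕜] E) (z : 𝕜) :
    Y.comp D - A.comp Y + (Y.comp C).comp Y =
      Y.comp (D + C.comp Y - z • 1) - (A - z • 1).comp Y := by
  simp only [comp_sub, comp_add, sub_comp, comp_smul, smul_comp, one_def, comp_id, id_comp,
    comp_assoc]
  abel

theorem sub_comp_sub_eq_comp_of_leftInverse {T R : E →L[𝕜] E} (hRT : R.comp T = 1)
    (C : E →L[𝕜] F) (Y : F →L[𝕜] E) (S : F →L[𝕜] F) :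
    S - C.comp Y - C.comp (R.comp (Y.comp S - T.comp Y)) = (1 - C.comp (R.comp Y)).comp S := by
  have hRTY : R.comp (T.comp Y) = Y := by rw [← comp_assoc, hRT, one_def, id_comp]
  rw [comp_sub R, hRTY, comp_sub C, sub_comp, ← comp_assoc, ← comp_assoc, one_def, id_comp]
  abel

end

theorem schur_complement_factorization_right_D_general {H_A H_D : Type*}
    [NormedAddCommGroup H_A] [InnerProductSpace ℂ H_A]
    [NormedAddCommGroup H_D] [InnerProductSpace ℂ H_D]
    (A : H_A →L[ℂ] H_A) (B : H_D →L[ℂ] H_A) (C : H_A →L[ℂ] H_D) (D : H_D →L[ℂ] H_D)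
    (Y : H_D →L[ℂ] H_A)
    (hY : Y.comp D - A.comp Y + (Y.comp C).comp Y = B)
    (z : ℂ) (hz : z ∈ resolventSet ℂ A) :
    D - z • (1 : H_D →L[ℂ] H_D)
        - C.comp ((Ring.inverse (A - z • (1 : H_A →L[ℂ] H_A))).comp B) =
      ((1 : H_D →L[ℂ] H_D)
          - C.comp ((Ring.inverse (A - z • (1 : H_A →L[ℂ] H_A))).comp Y)).comp
        (D + C.comp Y - z • (1 : H_D →L[ℂ] H_D)) := by
  have hinv : (Ring.inverse (A - z • 1)).comp (A - z • 1) = 1 :=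
    Ring.inverse_mul_cancel _ (isUnit_sub_smul_one_of_mem_resolventSet hz)
  have hD : D - z • (1 : H_D →L[ℂ] H_D) = (D + C.comp Y - z • 1) - C.comp Y := by abel
  rw [← hY, riccati_eq_comp_shift_sub_shift_comp A C D Y z, hD]
  exact sub_comp_sub_eq_comp_of_leftInverse hinv C Y _

/-- If `Y` solves the dual Riccati equation `YD − AY + YCY = B` and `Z_D := D + CY`, then
for every `z` in the resolvent set of `A` the Schur complement
`M_D(z) = D − z − C(A − z)⁻¹B` factorizes as `M_D(z) = W_D(z)(Z_D − z)` with
`W_D(z) = I − C(A − z)⁻¹Y`. -/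
theorem schur_complement_factorization_right_D {H_A H_D : Type*}
    [NormedAddCommGroup H_A] [InnerProductSpace ℂ H_A] [CompleteSpace H_A]
    [NormedAddCommGroup H_D] [InnerProductSpace ℂ H_D] [CompleteSpace H_D]
    (A : H_A →L[ℂ] H_A) (B : H_D →L[ℂ] H_A) (C : H_A →L[ℂ] H_D) (D : H_D →L[ℂ] H_D)
    (Y : H_D →L[ℂ] H_A)
    (hY : Y.comp D - A.comp Y + (Y.comp C).comp Y = B)
    (z : ℂ) (hz : z ∈ resolventSet ℂ A) :
    D - z • (1 : H_D →L[ℂ] H_D)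
        - C.comp ((Ring.inverse (A - z • (1 : H_A →L[ℂ] H_A))).comp B) =
      ((1 : H_D →L[ℂ] H_D)
          - C.comp ((Ring.inverse (A - z • (1 : H_A →L[ℂ] H_A))).comp Y)).comp
        (D + C.comp Y - z • (1 : H_D →L[ℂ] H_D)) :=
  schur_complement_factorization_right_D_general A B C D Y hY z hz
end

section
/- Suppose the bounded operator X : H_A → H_D is a solution of the Riccati equation XA − DX + XBX = C. Set Z̃_D := D − XB. Then for every z in the resolvent set of A the Schur complement admits the left factorization M_D(z) = (Z̃_D − z·I) ∘ W̃_D(z), where W̃_D(z) := I + X(A − z)^{-1}B. -/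
/-!
Writing `R = (A − z)⁻¹`, the relation `(A − z)R = 1` gives `XARB = XB + z·XRB`. Substituting the
Riccati equation `C = XA − DX + XBX` into `C R B` and using this, both sides of the factorization
expand to `D − XB − z + (D − XB − z)XRB`.
-/

namespace ContinuousLinearMap

variable {𝕜 E F : Type*} [NormedField 𝕜]
  [NormedAddCommGroup E] [NormedSpace 𝕜 E] [NormedAddCommGroup F] [NormedSpace 𝕜 F]

theorem comp_comp_eq_add_smul_of_sub_smul_one_mul_eq_one {A R : E →L[𝕜] E} {z : 𝕜}
    (hR : (A - z • 1) * R = 1) (B : F →L[𝕜] E) :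
    A.comp (R.comp B) = B + z • R.comp B := by
  have h := congrArg (fun T : E →L[𝕜] E => T.comp B) hR
  simp only [mul_def, sub_comp, smul_comp, comp_assoc, one_def, id_comp] at h
  exact sub_eq_iff_eq_add.mp h

theorem schur_complement_eq_comp_of_riccati {A R : E →L[𝕜] E} {z : 𝕜}
    (hR : (A - z • 1) * R = 1) (B : F →L[𝕜] E) (D : F →L[𝕜] F) (X : E →L[𝕜] F) :
    D - z • (1 : F →L[𝕜] F) - (X.comp A - D.comp X + (X.comp B).comp X).comp (R.comp B) =
      (D - X.comp B - z • (1 : F →L[𝕜] F)).comp (1 + X.comp (R.comp B)) := by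
  simp only [comp_add, add_comp, sub_comp, smul_comp, comp_assoc, one_def, comp_id,
    id_comp, comp_comp_eq_add_smul_of_sub_smul_one_mul_eq_one hR, comp_smul]
  abel

end ContinuousLinearMap

theorem schur_complement_factorization_left_D_general {H_A H_D : Type*}
    [NormedAddCommGroup H_A] [InnerProductSpace ℂ H_A]
    [NormedAddCommGroup H_D] [InnerProductSpace ℂ H_D]
    (A : H_A →L[ℂ] H_A) (B : H_D →L[ℂ] H_A) (C : H_A →L[ℂ] H_D) (D : H_D →L[ℂ] H_D)
    (X : H_A →L[ℂ] H_D)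
    (hX : X.comp A - D.comp X + (X.comp B).comp X = C)
    (z : ℂ) (hz : z ∈ resolventSet ℂ A) :
    D - z • (1 : H_D →L[ℂ] H_D)
        - C.comp ((Ring.inverse (A - z • (1 : H_A →L[ℂ] H_A))).comp B) =
      (D - X.comp B - z • (1 : H_D →L[ℂ] H_D)).comp
        ((1 : H_D →L[ℂ] H_D)
          + X.comp ((Ring.inverse (A - z • (1 : H_A →L[ℂ] H_A))).comp B)) := by
  have hunit : IsUnit (A - z • (1 : H_A →L[ℂ] H_A)) := by
    rw [spectrum.mem_resolventSet_iff, Algebra.algebraMap_eq_smul_one, IsUnit.sub_iff] at hz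
    exact hz
  subst hX
  exact ContinuousLinearMap.schur_complement_eq_comp_of_riccati
    (Ring.mul_inverse_cancel _ hunit) B D X

/-- If `X` solves the Riccati equation `XA − DX + XBX = C` and `Z̃_D := D − XB`, then
for every `z` in the resolvent set of `A` the Schur complement
`M_D(z) = D − z − C(A − z)⁻¹B` admits the left factorization
`M_D(z) = (Z̃_D − z)·W̃_D(z)` with `W̃_D(z) = I + X(A − z)⁻¹B`. -/
theorem schur_complement_factorization_left_D {H_A H_D : Type*}
    [NormedAddCommGroup H_A] [InnerProductSpace ℂ H_A] [CompleteSpace H_A]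
    [NormedAddCommGroup H_D] [InnerProductSpace ℂ H_D] [CompleteSpace H_D]
    (A : H_A →L[ℂ] H_A) (B : H_D →L[ℂ] H_A) (C : H_A →L[ℂ] H_D) (D : H_D →L[ℂ] H_D)
    (X : H_A →L[ℂ] H_D)
    (hX : X.comp A - D.comp X + (X.comp B).comp X = C)
    (z : ℂ) (hz : z ∈ resolventSet ℂ A) :
    D - z • (1 : H_D →L[ℂ] H_D)
        - C.comp ((Ring.inverse (A - z • (1 : H_A →L[ℂ] H_A))).comp B) =
      (D - X.comp B - z • (1 : H_D →L[ℂ] H_D)).comp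
        ((1 : H_D →L[ℂ] H_D)
          + X.comp ((Ring.inverse (A - z • (1 : H_A →L[ℂ] H_A))).comp B)) :=
  schur_complement_factorization_left_D_general A B C D X hX z hz
end

section
/- Suppose X : H_A → H_D is a bounded solution of XA − DX + XBX = C and Y : H_D → H_A is a bounded solution of YD − AY + YCY = B. Then (I − XY) ∘ (D + CY) = (D − XB) ∘ (I − XY) as operators on H_D. In particular, if 1 does not belong to the spectrum of XY, then D − XB = (I − XY)(D + CY)(I − XY)^{-1}, so the operators D + CY and D − XB are similar. -/
/-!
Substituting the first Riccati equation for `C` and the second for `B`, both sides of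
`(I − XY)(D + CY) = (D − XB)(I − XY)` expand to the same expression in `A, D, X, Y`.
The similarity is then the conjugation by the unit `I − XY`.
-/

namespace ContinuousLinearMap

variable {R M N : Type*} [Ring R]
  [TopologicalSpace M] [AddCommGroup M] [Module R M] [IsTopologicalAddGroup M]
  [TopologicalSpace N] [AddCommGroup N] [Module R N] [IsTopologicalAddGroup N]

theorem one_sub_comp_comp_eq_comp_one_sub_of_riccati
    (A : M →L[R] M) (B : N →L[R] M) (C : M →L[R] N) (D : N →L[R] N)
    (X : M →L[R] N) (Y : N →L[R] M)
    (hX : X.comp A - D.comp X + (X.comp B).comp X = C)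
    (hY : Y.comp D - A.comp Y + (Y.comp C).comp Y = B) :
    ((1 : N →L[R] N) - X.comp Y).comp (D + C.comp Y) =
      (D - X.comp B).comp ((1 : N →L[R] N) - X.comp Y) := by
  ext v
  have hXY : X (A (Y v)) - D (X (Y v)) + X (B (X (Y v))) = C (Y v) := by
    simpa using congr($hX (Y v))
  have hXB : X (Y (D v)) - X (A (Y v)) + X (Y (C (Y v))) = X (B v) := by
    simpa using congr(X ($hY v))
  simp only [comp_apply, sub_apply, add_apply, one_apply_eq_self, map_sub, map_add]
  linear_combination (norm := module) -hXY - hXB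

end ContinuousLinearMap

theorem eq_mul_mul_inverse_of_mul_eq_mul {M₀ : Type*} [MonoidWithZero M₀] {u a b : M₀}
    (hu : IsUnit u) (h : u * a = b * u) : b = u * a * Ring.inverse u := by
  rw [h, mul_assoc, Ring.mul_inverse_cancel u hu, mul_one]

theorem similarity_ZD_general {H_A H_D : Type*}
    [NormedAddCommGroup H_A] [InnerProductSpace ℂ H_A]
    [NormedAddCommGroup H_D] [InnerProductSpace ℂ H_D]
    (A : H_A →L[ℂ] H_A) (B : H_D →L[ℂ] H_A) (C : H_A →L[ℂ] H_D) (D : H_D →L[ℂ] H_D)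
    (X : H_A →L[ℂ] H_D) (Y : H_D →L[ℂ] H_A)
    (hX : X.comp A - D.comp X + (X.comp B).comp X = C)
    (hY : Y.comp D - A.comp Y + (Y.comp C).comp Y = B) :
    ((1 : H_D →L[ℂ] H_D) - X.comp Y).comp (D + C.comp Y) =
        (D - X.comp B).comp ((1 : H_D →L[ℂ] H_D) - X.comp Y) ∧
      ((1 : ℂ) ∉ spectrum ℂ (X.comp Y) →
        D - X.comp B =
          (((1 : H_D →L[ℂ] H_D) - X.comp Y) * (D + C.comp Y)) *
            Ring.inverse ((1 : H_D →L[ℂ] H_D) - X.comp Y)) := by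
  have intertwine := ContinuousLinearMap.one_sub_comp_comp_eq_comp_one_sub_of_riccati A B C D X Y hX hY
  refine ⟨intertwine, fun h1 => eq_mul_mul_inverse_of_mul_eq_mul ?_ intertwine⟩
  simpa using spectrum.notMem_iff.mp h1

/-- If `X` and `Y` solve the pair of Riccati equations, then
`(I − XY)(D + CY) = (D − XB)(I − XY)`; in particular, if `1 ∉ σ(XY)` then
`D − XB = (I − XY)(D + CY)(I − XY)⁻¹`, i.e. `D + CY` and `D − XB` are similar. -/
theorem similarity_ZD {H_A H_D : Type*}
    [NormedAddCommGroup H_A] [InnerProductSpace ℂ H_A] [CompleteSpace H_A]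
    [NormedAddCommGroup H_D] [InnerProductSpace ℂ H_D] [CompleteSpace H_D]
    (A : H_A →L[ℂ] H_A) (B : H_D →L[ℂ] H_A) (C : H_A →L[ℂ] H_D) (D : H_D →L[ℂ] H_D)
    (X : H_A →L[ℂ] H_D) (Y : H_D →L[ℂ] H_A)
    (hX : X.comp A - D.comp X + (X.comp B).comp X = C)
    (hY : Y.comp D - A.comp Y + (Y.comp C).comp Y = B) :
    ((1 : H_D →L[ℂ] H_D) - X.comp Y).comp (D + C.comp Y) =
        (D - X.comp B).comp ((1 : H_D →L[ℂ] H_D) - X.comp Y) ∧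
      ((1 : ℂ) ∉ spectrum ℂ (X.comp Y) →
        D - X.comp B =
          (((1 : H_D →L[ℂ] H_D) - X.comp Y) * (D + C.comp Y)) *
            Ring.inverse ((1 : H_D →L[ℂ] H_D) - X.comp Y)) :=
  similarity_ZD_general A B C D X Y hX hY
end
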